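/- Let n > 2, let V = 𝔽₂ⁿ, let g ∈ Sym(V), and let W ≤ V be a subspace such that σ_W = T ∩ T^g. If dim(W) = n − 2, then T normalises T^g, i.e. T ≤ N_{Sym(V)}(T^g). -/

import Mathlib

open Equiv

/-- `V n` is the `n`-dimensional vector space over the field with two elements. -/
abbrev V (n : ℕ) : Type := Fin n → ZMod 2

/-- The subgroup `σ_W` of `Sym(V)` consisting of the translations `x ↦ x + w` with `w ∈ W`. -/
def sigmaSub (n : ℕ) (W : Submodule (ZMod 2) (V n)) : Subgroup (Equiv.Perm (V n)) where
  carrier := {g | ∃ v ∈ W, ∀ x, g x = x + v}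
  one_mem' := ⟨0, W.zero_mem, fun x => by simp⟩
  mul_mem' := by
    rintro a b ⟨v, hv, ha⟩ ⟨w, hw, hb⟩
    exact ⟨w + v, W.add_mem hw hv, fun x => by
      simp [Equiv.Perm.mul_apply, ha, hb, add_assoc]⟩
  inv_mem' := by
    rintro a ⟨v, hv, ha⟩
    refine ⟨-v, W.neg_mem hv, fun x => a.injective ?_⟩
    rw [← Equiv.Perm.mul_apply, mul_inv_cancel, Equiv.Perm.one_apply, ha]
    abel

/-- The translation group `T`, i.e. the image of the right regular representation
of `(V, +)` in `Sym(V)`. -/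
def T (n : ℕ) : Subgroup (Equiv.Perm (V n)) := sigmaSub n ⊤

/-- The affine group `AGL(V) = T ⋊ GL(V)`, consisting of the invertible affine
transformations `x ↦ L x + v` of `V`. -/
def AGL (n : ℕ) : Subgroup (Equiv.Perm (V n)) where
  carrier := {g | ∃ (L : V n ≃ₗ[ZMod 2] V n) (v : V n), ∀ x, g x = L x + v}
  one_mem' := ⟨LinearEquiv.refl _ _, 0, fun x => by simp⟩
  mul_mem' := by
    rintro a b ⟨L, v, ha⟩ ⟨M, w, hb⟩
    exact ⟨M ≪≫ₗ L, L w + v, fun x => by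
      simp [Equiv.Perm.mul_apply, ha, hb, map_add, add_assoc]⟩
  inv_mem' := by
    rintro a ⟨L, v, ha⟩
    refine ⟨L.symm, -(L.symm v), fun x => a.injective ?_⟩
    rw [← Equiv.Perm.mul_apply, mul_inv_cancel, Equiv.Perm.one_apply, ha, map_add, map_neg, LinearEquiv.apply_symm_apply,
      LinearEquiv.apply_symm_apply]
    abel

/-- The conjugate subgroup `H^g = g⁻¹ H g`. -/
def conjSub {G : Type*} [Group G] (H : Subgroup G) (g : G) : Subgroup G :=
  H.map (MulAut.conj g⁻¹).toMonoidHom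

/-- A subgroup of `Sym(V)` is an elementary abelian regular subgroup if it is an
elementary abelian 2-group (every element squares to the identity) acting
regularly (sharply transitively) on `V`. -/
def IsElemAbelianRegular (n : ℕ) (R : Subgroup (Equiv.Perm (V n))) : Prop :=
  (∀ r ∈ R, r * r = 1) ∧ ∀ x y : V n, ∃! r : R, (r : Equiv.Perm (V n)) x = y

/-- `A` is a normal subgroup of `B` (as subgroups of a common ambient group). -/
def NormalIn {G : Type*} [Group G] (A B : Subgroup G) : Prop :=
  A ≤ B ∧ ∀ b ∈ B, ∀ a ∈ A, b * a * b⁻¹ ∈ A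

/-- `S` is a Sylow `2`-subgroup of `K` (as subgroups of a common ambient group):
`S` is a `2`-subgroup of `K` maximal among the `2`-subgroups of `K`. -/
def IsSylow2Of {G : Type*} [Group G] (S K : Subgroup G) : Prop :=
  S ≤ K ∧ IsPGroup 2 S ∧ ∀ Q : Subgroup G, Q ≤ K → IsPGroup 2 Q → S ≤ Q → Q = S

/-! `T^g` is an elementary abelian regular group containing `σ_W`, so every `τ ∈ T^g` commutes
with the translations by `W` and permutes the four cosets of `W`. Let `δ x = τ x - x`. If `τ`
maps some coset to itself, `τ` is a translation, because an abelian transitive group acts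
semiregularly. Otherwise `τ` induces a fixed-point-free involution of `V/W`; on four points this
forces `δ ≡ c (mod W)` for a single `c ≠ 0`. Then `δ` is constant on the cosets of `W + ⟨c⟩`,
which has index two, so `δ (x + v) - δ x = s` does not depend on `x` and lies in `W`. Hence
`σ_v τ σ_v = σ_s τ ∈ T^g`. -/

theorem commute_of_forall_mul_self_eq_one {G : Type*} [Group G] {H : Subgroup G}
    (hH : ∀ x ∈ H, x * x = 1) {a b : G} (ha : a ∈ H) (hb : b ∈ H) : Commute a b := by
  have inv_eq : ∀ x ∈ H, x⁻¹ = x := fun x hx => inv_eq_of_mul_eq_one_right (hH x hx)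
  calc a * b = (a * b)⁻¹ := (inv_eq _ (H.mul_mem ha hb)).symm
    _ = b * a := by rw [mul_inv_rev, inv_eq a ha, inv_eq b hb]

theorem Equiv.Perm.eq_of_forall_commute_of_apply_eq {α : Type*} {S : Set (Perm α)}
    (hS : ∀ x y, ∃ ρ ∈ S, ρ x = y) {σ τ : Perm α} (hσ : ∀ ρ ∈ S, Commute σ ρ)
    (hτ : ∀ ρ ∈ S, Commute τ ρ) {x₀ : α} (h : σ x₀ = τ x₀) : σ = τ := by
  ext y
  obtain ⟨ρ, hρ, rfl⟩ := hS x₀ y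
  calc σ (ρ x₀) = ρ (σ x₀) := Perm.ext_iff.mp (hσ ρ hρ).eq x₀
    _ = τ (ρ x₀) := by rw [h]; exact (Perm.ext_iff.mp (hτ ρ hρ).eq x₀).symm

namespace ZModModule

variable {M : Type*} [AddCommGroup M] [Module (ZMod 2) M]

theorem eq_zero_or_eq_or_eq_or_eq_add_of_card_le_four [Finite M] (hcard : Nat.card M ≤ 4)
    {a b : M} (ha : a ≠ 0) (hb : b ≠ 0) (hab : a ≠ b) (q : M) :
    q = 0 ∨ q = a ∨ q = b ∨ q = a + b := by
  by_contra! hq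
  have hab' : a + b ≠ 0 := by rwa [Ne, ← sub_eq_add, sub_eq_zero]
  have hinj : Function.Injective ![0, a, b, a + b, q] := by
    intro i j hij
    fin_cases i <;> fin_cases j <;> simp_all [eq_comm]
  simpa using Nat.card_le_card_of_injective _ hinj |>.trans hcard

end ZModModule

section QuotientDisplacement

/- In the applications `f` is the displacement `x ↦ τ x - x` of an involution `τ` commuting with
the translations by `W`. -/

variable {M : Type*} [AddCommGroup M] [Module (ZMod 2) M] {W : Submodule (ZMod 2) M} {f : M → M}

theorem apply_eq_of_mkQ_eq_mkQ_add (hfW : ∀ x y, W.mkQ x = W.mkQ y → f x = f y)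
    (hfix : ∀ x, f (x + f x) = f x) {x y : M} (h : W.mkQ x = W.mkQ (y + f y)) : f x = f y :=
  (hfW _ _ h).trans (hfix y)

theorem mkQ_apply_eq_of_forall_notMem [Finite (M ⧸ W)] (hcard : Nat.card (M ⧸ W) ≤ 4)
    (hfW : ∀ x y, W.mkQ x = W.mkQ y → f x = f y) (hfix : ∀ x, f (x + f x) = f x)
    (hf : ∀ x, f x ∉ W) (x y : M) : W.mkQ (f x) = W.mkQ (f y) := by
  have hf0 : ∀ x, W.mkQ (f x) ≠ 0 := fun x => by
    simpa [Submodule.Quotient.mk_eq_zero] using hf x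
  by_contra hne
  refine hne (congrArg W.mkQ ?_)
  obtain h | h | h | h := ZModModule.eq_zero_or_eq_or_eq_or_eq_add_of_card_le_four hcard (hf0 x)
    (hf0 y) hne (W.mkQ y - W.mkQ x)
  all_goals rw [sub_eq_iff_eq_add'] at h
  · exact hfW x y (by rw [h, add_zero])
  · exact (apply_eq_of_mkQ_eq_mkQ_add hfW hfix (by rw [h, map_add])).symm
  · exact apply_eq_of_mkQ_eq_mkQ_add hfW hfix
      (by rw [map_add, h, add_assoc, ZModModule.add_self, add_zero])
  · calc f x = f (x + f x) := (hfix x).symm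
      _ = f (y + f y) := hfW _ _ <| by
        rw [map_add, map_add, h, add_assoc, add_assoc, ZModModule.add_self, add_zero]
      _ = f y := hfix y

theorem exists_mem_forall_apply_add_eq_of_forall_notMem [Finite (M ⧸ W)]
    (hcard : Nat.card (M ⧸ W) ≤ 4) (hfW : ∀ x y, W.mkQ x = W.mkQ y → f x = f y)
    (hfix : ∀ x, f (x + f x) = f x) (hf : ∀ x, f x ∉ W) (v : M) :
    ∃ s ∈ W, ∀ x, f (x + v) = f x + s := by
  set c := W.mkQ (f 0)
  have hc : ∀ x, W.mkQ (f x) = c := fun x => mkQ_apply_eq_of_forall_notMem hcard hfW hfix hf x 0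
  have hc0 : c ≠ 0 := by simpa [c, Submodule.Quotient.mk_eq_zero] using hf 0
  have hshift : ∀ x y, W.mkQ x = W.mkQ y ∨ W.mkQ x = W.mkQ y + c → f x = f y := by
    rintro x y (h | h)
    · exact hfW x y h
    · exact apply_eq_of_mkQ_eq_mkQ_add hfW hfix (by rw [h, map_add, hc])
  refine ⟨f v - f 0, ?_, fun x => ?_⟩
  · rw [← Submodule.Quotient.mk_eq_zero, Submodule.Quotient.mk_sub]
    exact sub_eq_zero.mpr ((hc v).trans (hc 0).symm)
  by_cases hv : W.mkQ v = 0 ∨ W.mkQ v = c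
  · rw [hshift (x + v) x (hv.imp (by rw [map_add, ·, add_zero]) (by rw [map_add, ·])),
      hshift v 0 (hv.imp (by rw [·, map_zero]) (by rw [·, map_zero, zero_add])), sub_self,
      add_zero]
  push Not at hv
  obtain h | h | h | h := ZModModule.eq_zero_or_eq_or_eq_or_eq_add_of_card_le_four hcard hc0 hv.1
    (Ne.symm hv.2) (W.mkQ x)
  · rw [hshift (x + v) v (.inl (by rw [map_add, h, zero_add])),
      hshift x 0 (.inl (by rw [h, map_zero])), add_sub_cancel]
  · rw [hshift (x + v) v (.inr (by rw [map_add, h, add_comm])),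
      hshift x 0 (.inr (by rw [h, map_zero, zero_add])), add_sub_cancel]
  · rw [hshift (x + v) 0 (.inl (by rw [map_add, h, ZModModule.add_self, map_zero])),
      hshift x v (.inl h), ZModModule.sub_eq_add, ← add_assoc, ZModModule.add_self, zero_add]
  · rw [hshift (x + v) 0 (.inr (by rw [map_add, h, add_assoc, ZModModule.add_self, map_zero,
        add_zero, zero_add])),
      hshift x v (.inr (by rw [h, add_comm])), ZModModule.sub_eq_add, ← add_assoc,
      ZModModule.add_self, zero_add]

end QuotientDisplacement

section ElementaryAbelianTransitive

variable {M : Type*} [AddCommGroup M] [Module (ZMod 2) M] {W : Submodule (ZMod 2) M}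
  {H : Subgroup (Perm M)}

theorem exists_mem_forall_apply_add_eq_add (hH : ∀ τ ∈ H, τ * τ = 1)
    (htrans : ∀ x y, ∃ ρ ∈ H, ρ x = y) (hWH : ∀ w ∈ W, Equiv.addRight w ∈ H) [Finite (M ⧸ W)]
    (hcard : Nat.card (M ⧸ W) ≤ 4) {τ : Perm M} (hτ : τ ∈ H) (v : M) :
    ∃ s ∈ W, ∀ x, τ (x + v) = τ x + v + s := by
  have hcomm : ∀ σ ∈ H, ∀ ρ ∈ H, Commute σ ρ := fun σ hσ ρ hρ =>
    commute_of_forall_mul_self_eq_one hH hσ hρ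
  by_cases hfixes : ∃ x₀, τ x₀ - x₀ ∈ W
  · obtain ⟨x₀, hx₀⟩ := hfixes
    have hτ_eq : τ = Equiv.addRight (τ x₀ - x₀) :=
      Perm.eq_of_forall_commute_of_apply_eq (x₀ := x₀) htrans (hcomm τ hτ) (hcomm _ (hWH _ hx₀))
        (by simp)
    exact ⟨0, W.zero_mem, fun x => by rw [hτ_eq]; simp [add_right_comm]⟩
  push Not at hfixes
  have hτW : ∀ x, ∀ w ∈ W, τ (x + w) = τ x + w := fun x w hw =>
    Perm.ext_iff.mp (hcomm τ hτ _ (hWH w hw)).eq x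
  have hδW : ∀ x y, W.mkQ x = W.mkQ y → τ x - x = τ y - y := by
    intro x y hxy
    rw [← add_sub_cancel y x, hτW y _ ((Submodule.Quotient.eq W).mp hxy)]
    abel
  have hδτ : ∀ x, τ (x + (τ x - x)) - (x + (τ x - x)) = τ x - x := by
    intro x
    rw [add_sub_cancel, ← Perm.mul_apply, hH τ hτ, Perm.one_apply, ← neg_sub,
      ZModModule.neg_eq_self]
  obtain ⟨s, hs, hδs⟩ := exists_mem_forall_apply_add_eq_of_forall_notMem hcard hδW hδτ hfixes v
  refine ⟨s, hs, fun x => ?_⟩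
  rw [← sub_add_cancel (τ (x + v)) (x + v), hδs x]
  abel

theorem addRight_mul_mul_inv_mem (hH : ∀ τ ∈ H, τ * τ = 1)
    (htrans : ∀ x y, ∃ ρ ∈ H, ρ x = y) (hWH : ∀ w ∈ W, Equiv.addRight w ∈ H) [Finite (M ⧸ W)]
    (hcard : Nat.card (M ⧸ W) ≤ 4) {τ : Perm M} (hτ : τ ∈ H) (v : M) :
    Equiv.addRight v * τ * (Equiv.addRight v)⁻¹ ∈ H := by
  obtain ⟨s, hs, hτs⟩ := exists_mem_forall_apply_add_eq_add hH htrans hWH hcard hτ (-v)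
  convert H.mul_mem (hWH s hs) hτ using 1
  ext x
  simp [hτs, add_right_comm _ (-v)]

end ElementaryAbelianTransitive

theorem mul_self_eq_one_of_mem_T {n : ℕ} {t : Perm (V n)} (ht : t ∈ T n) : t * t = 1 := by
  obtain ⟨v, -, hv⟩ := ht
  ext x
  simp [hv, add_assoc, ZModModule.add_self]

theorem mul_self_eq_one_of_mem_conjSub_T {n : ℕ} (g : Perm (V n)) :
    ∀ ρ ∈ conjSub (T n) g, ρ * ρ = 1 := by
  rintro _ ⟨t, ht, rfl⟩
  rw [← map_mul, mul_self_eq_one_of_mem_T ht, map_one]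

theorem exists_mem_conjSub_T_apply_eq {n : ℕ} (g : Perm (V n)) (x y : V n) :
    ∃ ρ ∈ conjSub (T n) g, ρ x = y :=
  ⟨g⁻¹ * Equiv.addRight (g y - g x) * g,
    ⟨Equiv.addRight (g y - g x), ⟨_, trivial, fun _ => rfl⟩, by simp⟩, by simp⟩

theorem card_quotient_le_four_of_finrank_eq_sub_two {n : ℕ} {W : Submodule (ZMod 2) (V n)}
    (hdim : Module.finrank (ZMod 2) W = n - 2) : Nat.card (V n ⧸ W) ≤ 4 := by
  have hrank := W.finrank_quotient_add_finrank
  rw [Module.finrank_fin_fun, hdim] at hrank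
  rw [Module.natCard_eq_pow_finrank (K := ZMod 2), Nat.card_zmod]
  calc 2 ^ Module.finrank (ZMod 2) (V n ⧸ W) ≤ 2 ^ 2 := Nat.pow_le_pow_right two_pos (by omega)
    _ = 4 := rfl

theorem translationGroup_le_normalizer_conj_of_second_maximal_intersection_general
    (n : ℕ) (g : Equiv.Perm (V n))
    (W : Submodule (ZMod 2) (V n))
    (hW : sigmaSub n W = T n ⊓ conjSub (T n) g)
    (hdim : Module.finrank (ZMod 2) W = n - 2) :
    T n ≤ Subgroup.normalizer (conjSub (T n) g : Set (Equiv.Perm (V n))) := by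
  have hWH : ∀ w ∈ W, Equiv.addRight w ∈ conjSub (T n) g := fun w hw =>
    (hW ▸ ⟨w, hw, fun _ => rfl⟩ : Equiv.addRight w ∈ T n ⊓ conjSub (T n) g).2
  rw [Subgroup.le_normalizer_iff]
  rintro t ⟨v, -, hv⟩ τ hτ
  obtain rfl : t = Equiv.addRight v := Equiv.ext hv
  exact addRight_mul_mul_inv_mem (mul_self_eq_one_of_mem_conjSub_T g)
    (exists_mem_conjSub_T_apply_eq g) hWH (card_quotient_le_four_of_finrank_eq_sub_two hdim) hτ v

/-- If `σ_W = T ∩ T^g` with `dim W = n - 2`, then `T` normalises `T^g`. -/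
theorem translationGroup_le_normalizer_conj_of_second_maximal_intersection
    (n : ℕ) (hn : 2 < n) (g : Equiv.Perm (V n))
    (W : Submodule (ZMod 2) (V n))
    (hW : sigmaSub n W = T n ⊓ conjSub (T n) g)
    (hdim : Module.finrank (ZMod 2) W = n - 2) :
    T n ≤ Subgroup.normalizer (conjSub (T n) g : Set (Equiv.Perm (V n))) :=
  translationGroup_le_normalizer_conj_of_second_maximal_intersection_general n g W hW hdim
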